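/- For every symbol Λ with Υ(Λ) = (λ;μ) there exists a symbol ᵈΛ, unique up to shift-equivalence, such that def(ᵈΛ) = def(Λ) and Υ(ᵈΛ) = (μᵗ; λᵗ), where νᵗ denotes the transpose (conjugate) partition of ν. Moreover rank(ᵈΛ) = rank(Λ), and ᵈ(ᵈΛ) is shift-equivalent to Λ, so that Λ ↦ ᵈΛ is an involution on the shift-equivalence classes of symbols of any fixed rank and defect. -/

import Mathlib

/-- A Lusztig symbol: a pair of finite sets of natural numbers (equivalently, a pair of
strictly decreasing finite sequences of natural numbers). -/
structure LSymbol where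
  A : Finset ℕ
  B : Finset ℕ

namespace LSymbol

/-- The rank of a symbol: `Σ aᵢ + Σ bⱼ − ⌊((m₁+m₂−1)/2)²⌋`. -/
def rank (Λ : LSymbol) : ℤ :=
  ((Λ.A.sum id + Λ.B.sum id : ℕ) : ℤ) - ((Λ.A.card + Λ.B.card : ℤ) - 1) ^ 2 / 4

/-- The defect of a symbol: `m₁ − m₂`. -/
def defect (Λ : LSymbol) : ℤ :=
  (Λ.A.card : ℤ) - (Λ.B.card : ℤ)

/-- The shift of a symbol: add 1 to every entry of each row and append a new entry 0. -/
def shift (Λ : LSymbol) : LSymbol :=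
  ⟨insert 0 (Λ.A.image (· + 1)), insert 0 (Λ.B.image (· + 1))⟩

/-- Shift-equivalence: the equivalence relation generated by `Λ ∼ shift Λ`. -/
def ShiftEquiv : LSymbol → LSymbol → Prop :=
  Relation.EqvGen fun Λ Λ' => Λ' = Λ.shift

/-- The partition (as a multiset of nonzero parts) attached to one row of a symbol:
for the row `a₁ > a₂ > … > a_m`, the parts are `aᵢ − (m − i)`, discarding zeros. -/
def rowParts (s : Finset ℕ) : Multiset ℕ :=
  (((((s.sort (· ≤ ·)).zipIdx.map Prod.swap).map fun p => p.2 - p.1) : Multiset ℕ)).filter (· ≠ 0)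

/-- The bi-partition `Υ(Λ)` attached to a symbol. -/
def upsilon (Λ : LSymbol) : Multiset ℕ × Multiset ℕ :=
  (rowParts Λ.A, rowParts Λ.B)

end LSymbol

/-- The transpose (conjugate) of a partition given as a multiset of parts: the `i`-th
part of the conjugate is the number of parts of `μ` that are `≥ i`. -/
def conjPartition (μ : Multiset ℕ) : Multiset ℕ :=
  ((Multiset.range μ.sum).map fun i => (μ.filter fun p => i < p).card).filter (· ≠ 0)

/-- `D` is an Alvis–Curtis dual of `Λ`: it has the same defect, and its bi-partition is
`(μᵗ; λᵗ)` where `Υ(Λ) = (λ; μ)`. -/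
def IsACDual (Λ D : LSymbol) : Prop :=
  D.defect = Λ.defect ∧
  D.upsilon = (conjPartition Λ.upsilon.2, conjPartition Λ.upsilon.1)

/-!
List a row `s` increasingly as `s₀ < ⋯ < s_{m-1}`. The numbers `pᵢ = sᵢ - i` form a weakly
increasing sequence whose nonzero terms are the partition of the row, and `s = {pᵢ + i}`. So a
row is determined by its length and its partition, and shifting only adds a leading `0` to the
sequence. Two symbols with the same defect and bipartition therefore coincide after shifting each
by the length of the other's first row.

Transposition preserves `|ν|` and is an involution on partitions, as the Young diagram of `νᵗ`
is the reflection of that of `ν`; the rank of a symbol is `|λ| + |μ|` plus a function of the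
defect. A dual is obtained by padding the transposed partitions with zeros.
-/

lemma Multiset.sum_filter_ne_zero {M : Type*} [AddCommMonoid M] [DecidableEq M] (s : Multiset M) :
    (s.filter (· ≠ 0)).sum = s.sum := by
  conv_rhs => rw [← Multiset.filter_add_not (· ≠ 0) s]
  have hzero : (s.filter fun a => ¬a ≠ 0).sum = 0 :=
    Multiset.sum_eq_zero fun x hx => by simpa using Multiset.of_mem_filter hx
  rw [Multiset.sum_add, hzero, add_zero]

lemma Multiset.eq_of_card_eq_of_filter_ne_eq {α : Type*} [DecidableEq α] {M N : Multiset α}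
    (a : α) (hc : card M = card N) (hf : M.filter (· ≠ a) = N.filter (· ≠ a)) : M = N := by
  ext b
  obtain rfl | hb := eq_or_ne b a
  · have hM := Multiset.card_eq_countP_add_countP (· ≠ b) M
    have hN := Multiset.card_eq_countP_add_countP (· ≠ b) N
    simp only [Multiset.countP_eq_card_filter, hf, ne_eq, not_not] at hM hN
    rw [Multiset.filter_eq', Multiset.card_replicate] at hM hN
    omega
  · have := congrArg (Multiset.count b) hf
    rwa [Multiset.count_filter_of_pos (p := (· ≠ a)) hb,
      Multiset.count_filter_of_pos (p := (· ≠ a)) hb] at this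

namespace LSymbol

def partsList (s : Finset ℕ) : List ℕ := (s.sort (· ≤ ·)).mapIdx fun i a => a - i

def ofPartsList (l : List ℕ) : Finset ℕ := (l.mapIdx fun i a => a + i).toFinset

lemma getElem_add_sub_le_getElem {l : List ℕ} (hl : l.Pairwise (· < ·)) {i j : ℕ} (hij : i ≤ j)
    (hj : j < l.length) : l[i] + (j - i) ≤ l[j] := by
  induction j, hij using Nat.le_induction with
  | base => simp
  | succ j hij ih =>
    have := List.pairwise_iff_getElem.1 hl j (j + 1) (by omega) hj (by omega)
    have := ih (by omega)
    omega

lemma le_getElem_sort (s : Finset ℕ) {i : ℕ} (hi : i < (s.sort (· ≤ ·)).length) :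
    i ≤ (s.sort (· ≤ ·))[i] := by
  have := getElem_add_sub_le_getElem (Finset.sortedLT_sort s).pairwise (Nat.zero_le i) hi
  omega

lemma length_partsList (s : Finset ℕ) : (partsList s).length = s.card := by
  simp [partsList]

lemma pairwise_le_partsList (s : Finset ℕ) : (partsList s).Pairwise (· ≤ ·) := by
  rw [List.pairwise_iff_getElem]
  intro i j hi hj hij
  simp only [partsList, List.length_mapIdx, List.getElem_mapIdx] at hi hj ⊢
  have := getElem_add_sub_le_getElem (Finset.sortedLT_sort s).pairwise hij.le hj
  omega

lemma mapIdx_partsList (s : Finset ℕ) :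
    (partsList s).mapIdx (fun i a => a + i) = s.sort (· ≤ ·) := by
  refine List.ext_getElem (by simp [partsList]) fun i _ hi => ?_
  simp only [partsList, List.getElem_mapIdx]
  have := le_getElem_sort s hi
  omega

lemma ofPartsList_partsList (s : Finset ℕ) : ofPartsList (partsList s) = s := by
  rw [ofPartsList, mapIdx_partsList, Finset.sort_toFinset]

lemma sort_ofPartsList {l : List ℕ} (hl : l.Pairwise (· ≤ ·)) :
    (ofPartsList l).sort (· ≤ ·) = l.mapIdx fun i a => a + i := by
  have hlt : (l.mapIdx fun i a => a + i).Pairwise (· < ·) := by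
    rw [List.pairwise_iff_getElem] at hl ⊢
    intro i j hi hj hij
    simp only [List.length_mapIdx, List.getElem_mapIdx] at hi hj ⊢
    have := hl i j hi hj hij
    omega
  exact (List.toFinset_sort _ hlt.nodup).2 (hlt.imp le_of_lt)

lemma partsList_ofPartsList {l : List ℕ} (hl : l.Pairwise (· ≤ ·)) :
    partsList (ofPartsList l) = l := by
  apply List.ext_getElem <;> simp [partsList, sort_ofPartsList hl]

lemma card_ofPartsList {l : List ℕ} (hl : l.Pairwise (· ≤ ·)) :
    (ofPartsList l).card = l.length := by
  rw [← length_partsList, partsList_ofPartsList hl]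

lemma rowParts_eq_filter (s : Finset ℕ) :
    rowParts s = (partsList s : Multiset ℕ).filter (· ≠ 0) := by
  simp [rowParts, partsList, List.mapIdx_eq_zipIdx_map, Function.comp_def]

lemma eq_of_card_eq_of_rowParts_eq {s t : Finset ℕ} (hc : s.card = t.card)
    (hp : rowParts s = rowParts t) : s = t := by
  have hperm : (partsList s : Multiset ℕ) = partsList t := by
    refine Multiset.eq_of_card_eq_of_filter_ne_eq 0 ?_ ?_
    · simpa [length_partsList] using hc
    · rwa [rowParts_eq_filter, rowParts_eq_filter] at hp
  rw [← ofPartsList_partsList s, ← ofPartsList_partsList t, List.Perm.eq_of_pairwise'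
    (pairwise_le_partsList s) (pairwise_le_partsList t) (Multiset.coe_eq_coe.1 hperm)]

lemma sort_insert_zero_image_succ (s : Finset ℕ) :
    (insert 0 (s.image (· + 1))).sort (· ≤ ·) = 0 :: (s.sort (· ≤ ·)).map (· + 1) := by
  have hlt : (0 :: (s.sort (· ≤ ·)).map (· + 1)).Pairwise (· < ·) := by
    simpa [List.pairwise_map] using (Finset.sortedLT_sort s).pairwise
  rw [← (List.toFinset_sort _ hlt.nodup).2 (hlt.imp le_of_lt)]
  congr 1
  ext
  simp

lemma partsList_insert_zero_image_succ (s : Finset ℕ) :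
    partsList (insert 0 (s.image (· + 1))) = 0 :: partsList s := by
  simp only [partsList, sort_insert_zero_image_succ, List.mapIdx_cons, Nat.sub_zero,
    List.cons.injEq, true_and]
  apply List.ext_getElem <;> simp

lemma card_insert_zero_image_succ (s : Finset ℕ) :
    (insert 0 (s.image (· + 1))).card = s.card + 1 := by
  rw [← length_partsList, partsList_insert_zero_image_succ, List.length_cons, length_partsList]

lemma rowParts_insert_zero_image_succ (s : Finset ℕ) :
    rowParts (insert 0 (s.image (· + 1))) = rowParts s := by
  rw [rowParts_eq_filter, partsList_insert_zero_image_succ, rowParts_eq_filter]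
  simp

lemma two_mul_sum_mapIdx_add_length (l : List ℕ) :
    2 * (l.mapIdx fun i a => a + i).sum + l.length = 2 * l.sum + l.length ^ 2 := by
  induction l using List.reverseRecOn with
  | nil => simp
  | append_singleton l a ih =>
    simp only [List.mapIdx_concat, List.sum_append, List.length_append, List.length_singleton,
      List.sum_cons, List.sum_nil]
    linear_combination ih

lemma two_mul_sum_add_card (s : Finset ℕ) :
    2 * s.sum id + s.card = 2 * (rowParts s).sum + s.card ^ 2 := by
  have hsort : s.sum id = (s.sort (· ≤ ·)).sum := by
    rw [← Multiset.sum_coe, Finset.sort_eq, Finset.sum, Multiset.map_id]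
  have hparts : (partsList s).sum = (rowParts s).sum := by
    rw [rowParts_eq_filter, Multiset.sum_filter_ne_zero, Multiset.sum_coe]
  rw [hsort, ← mapIdx_partsList, ← length_partsList, two_mul_sum_mapIdx_add_length, hparts]

end LSymbol

def countGt (μ : Multiset ℕ) (i : ℕ) : ℕ := (μ.filter (i < ·)).card

lemma countGt_antitone (μ : Multiset ℕ) : Antitone (countGt μ) := fun _ _ hij =>
  Multiset.card_le_card (Multiset.monotone_filter_right μ fun _ hb => hij.trans_lt hb)

lemma countGt_cons (a : ℕ) (μ : Multiset ℕ) (i : ℕ) :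
    countGt (a ::ₘ μ) i = countGt μ i + if i < a then 1 else 0 := by
  simp only [countGt, Multiset.filter_cons]
  split_ifs <;> simp [add_comm]

lemma countGt_eq_countGt_succ_add_count (μ : Multiset ℕ) (k : ℕ) :
    countGt μ k = countGt μ (k + 1) + μ.count (k + 1) := by
  induction μ using Multiset.induction_on with
  | empty => simp [countGt]
  | cons a μ ih =>
    rw [countGt_cons, countGt_cons, Multiset.count_cons, ih]
    split_ifs <;> omega

lemma lt_sum_of_pos_countGt {μ : Multiset ℕ} {j : ℕ} (h : 0 < countGt μ j) : j < μ.sum := by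
  obtain ⟨p, hp⟩ := Multiset.card_pos_iff_exists_mem.1 h
  exact (Multiset.of_mem_filter hp).trans_le
    (Multiset.le_sum_of_mem (Multiset.mem_of_mem_filter hp))

lemma sum_range_countGt {μ : Multiset ℕ} {n : ℕ} (h : ∀ p ∈ μ, p ≤ n) :
    ∑ i ∈ Finset.range n, countGt μ i = μ.sum := by
  induction μ using Multiset.induction_on with
  | empty => simp [countGt]
  | cons a μ ih =>
    have hfilter : (Finset.range n).filter (· < a) = Finset.range a := by
      ext i
      simp only [Finset.mem_filter, Finset.mem_range]
      have := h a (Multiset.mem_cons_self a μ)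
      omega
    simp only [countGt_cons, Finset.sum_add_distrib, Finset.sum_boole, hfilter, Finset.card_range,
      Nat.cast_id, Multiset.sum_cons, ih fun p hp => h p (Multiset.mem_cons_of_mem hp), add_comm]

lemma conjPartition_eq (μ : Multiset ℕ) :
    conjPartition μ = ((Multiset.range μ.sum).map (countGt μ)).filter (· ≠ 0) := rfl

lemma zero_notMem_conjPartition (μ : Multiset ℕ) : 0 ∉ conjPartition μ :=
  fun h => Multiset.of_mem_filter h rfl

lemma sum_conjPartition (μ : Multiset ℕ) : (conjPartition μ).sum = μ.sum := by
  rw [conjPartition_eq, Multiset.sum_filter_ne_zero, ← Finset.range_val,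
    ← Finset.sum_eq_multiset_sum, sum_range_countGt fun p hp => Multiset.le_sum_of_mem hp]

lemma countGt_conjPartition (μ : Multiset ℕ) (i : ℕ) :
    countGt (conjPartition μ) i
      = ((Finset.range μ.sum).filter fun x => i < countGt μ x).card := by
  rw [conjPartition_eq, countGt, Multiset.filter_filter,
    Multiset.filter_congr (q := (i < ·)) fun x _ => and_iff_left_of_imp fun h => by omega,
    Multiset.filter_map, Multiset.card_map]
  rfl

lemma lt_countGt_conjPartition_iff (μ : Multiset ℕ) (i j : ℕ) :
    j < countGt (conjPartition μ) i ↔ i < countGt μ j := by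
  rw [countGt_conjPartition]
  constructor
  · intro hj
    by_contra! hi
    have hsub : (Finset.range μ.sum).filter (fun x => i < countGt μ x) ⊆ Finset.range j := by
      intro x hx
      simp only [Finset.mem_filter, Finset.mem_range] at hx ⊢
      by_contra! hjx
      exact (hx.2.trans_le (countGt_antitone μ hjx)).not_ge hi
    simpa using hj.trans_le (Finset.card_le_card hsub)
  · intro hi
    have hsub :
        Finset.range (j + 1) ⊆ (Finset.range μ.sum).filter (fun x => i < countGt μ x) := by
      intro x hx
      simp only [Finset.mem_filter, Finset.mem_range] at hx ⊢
      exact ⟨hx.trans_le (lt_sum_of_pos_countGt (i.zero_le.trans_lt hi)),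
        hi.trans_le (countGt_antitone μ (Nat.lt_succ_iff.1 hx))⟩
    simpa using Finset.card_le_card hsub

lemma countGt_conjPartition_conjPartition (μ : Multiset ℕ) :
    countGt (conjPartition (conjPartition μ)) = countGt μ :=
  funext fun j => eq_of_forall_lt_iff fun i => by
    rw [lt_countGt_conjPartition_iff, lt_countGt_conjPartition_iff]

lemma eq_of_countGt_eq {μ ν : Multiset ℕ} (hμ : 0 ∉ μ) (hν : 0 ∉ ν)
    (h : countGt μ = countGt ν) : μ = ν := by
  ext a
  rcases a with _ | k
  · rw [Multiset.count_eq_zero.2 hμ, Multiset.count_eq_zero.2 hν]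
  · have hμk := countGt_eq_countGt_succ_add_count μ k
    have hνk := countGt_eq_countGt_succ_add_count ν k
    rw [h] at hμk
    omega

lemma conjPartition_conjPartition {μ : Multiset ℕ} (hμ : 0 ∉ μ) :
    conjPartition (conjPartition μ) = μ :=
  eq_of_countGt_eq (zero_notMem_conjPartition _) hμ (countGt_conjPartition_conjPartition μ)

namespace LSymbol

lemma zero_notMem_rowParts (s : Finset ℕ) : 0 ∉ rowParts s :=
  fun h => Multiset.of_mem_filter h rfl

lemma card_A_shift_iterate (Λ : LSymbol) (n : ℕ) : (shift^[n] Λ).A.card = Λ.A.card + n := by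
  induction n with
  | zero => rfl
  | succ n ih =>
    rw [Function.iterate_succ_apply', ← add_assoc, ← ih]
    exact card_insert_zero_image_succ _

lemma card_B_shift_iterate (Λ : LSymbol) (n : ℕ) : (shift^[n] Λ).B.card = Λ.B.card + n := by
  induction n with
  | zero => rfl
  | succ n ih =>
    rw [Function.iterate_succ_apply', ← add_assoc, ← ih]
    exact card_insert_zero_image_succ _

lemma upsilon_shift_iterate (Λ : LSymbol) (n : ℕ) : (shift^[n] Λ).upsilon = Λ.upsilon := by
  induction n with
  | zero => rfl
  | succ n ih =>
    rw [Function.iterate_succ_apply', ← ih]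
    exact Prod.ext (rowParts_insert_zero_image_succ _) (rowParts_insert_zero_image_succ _)

lemma shiftEquiv_shift_iterate (Λ : LSymbol) (n : ℕ) : ShiftEquiv Λ (shift^[n] Λ) := by
  induction n with
  | zero => exact Relation.EqvGen.refl Λ
  | succ n ih =>
    rw [Function.iterate_succ_apply']
    exact Relation.EqvGen.trans _ _ _ ih (Relation.EqvGen.rel _ _ rfl)

lemma eq_of_card_eq_of_upsilon_eq {X Y : LSymbol} (hA : X.A.card = Y.A.card)
    (hB : X.B.card = Y.B.card) (hu : X.upsilon = Y.upsilon) : X = Y := by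
  cases X
  cases Y
  exact congrArg₂ LSymbol.mk (eq_of_card_eq_of_rowParts_eq hA (congrArg Prod.fst hu))
    (eq_of_card_eq_of_rowParts_eq hB (congrArg Prod.snd hu))

theorem shiftEquiv_of_defect_eq_of_upsilon_eq {X Y : LSymbol} (hd : X.defect = Y.defect)
    (hu : X.upsilon = Y.upsilon) : ShiftEquiv X Y := by
  have hXY : shift^[Y.A.card] X = shift^[X.A.card] Y := by
    apply eq_of_card_eq_of_upsilon_eq
    · rw [card_A_shift_iterate, card_A_shift_iterate, add_comm]
    · rw [card_B_shift_iterate, card_B_shift_iterate]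
      simp only [defect] at hd
      omega
    · rw [upsilon_shift_iterate, upsilon_shift_iterate, hu]
  have hY := Relation.EqvGen.symm _ _ (shiftEquiv_shift_iterate Y X.A.card)
  rw [← hXY] at hY
  exact Relation.EqvGen.trans _ _ _ (shiftEquiv_shift_iterate X _) hY

lemma rank_eq (Λ : LSymbol) :
    Λ.rank = ((Λ.upsilon.1.sum + Λ.upsilon.2.sum : ℕ) : ℤ)
      + ((Λ.defect ^ 2 - Λ.defect) / 2 - (Λ.defect - 1) ^ 2 / 4) := by
  have hA : 2 * ((Λ.A.sum id : ℕ) : ℤ) + Λ.A.card = 2 * ((rowParts Λ.A).sum : ℕ)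
      + (Λ.A.card : ℤ) ^ 2 := by exact_mod_cast two_mul_sum_add_card Λ.A
  have hB : 2 * ((Λ.B.sum id : ℕ) : ℤ) + Λ.B.card = 2 * ((rowParts Λ.B).sum : ℕ)
      + (Λ.B.card : ℤ) ^ 2 := by exact_mod_cast two_mul_sum_add_card Λ.B
  simp only [rank, defect, upsilon]
  have h1 : ((Λ.A.card : ℤ) + Λ.B.card - 1) ^ 2
      = (Λ.A.card - Λ.B.card - 1) ^ 2 + 4 * (Λ.A.card * Λ.B.card - Λ.B.card) := by ring
  have h2 : ((Λ.A.card : ℤ) - Λ.B.card) ^ 2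
      = Λ.A.card ^ 2 + Λ.B.card ^ 2 - 2 * (Λ.A.card * Λ.B.card) := by ring
  omega

def rowOfParts (μ : Multiset ℕ) (z : ℕ) : Finset ℕ :=
  ofPartsList (List.replicate z 0 ++ μ.sort (· ≤ ·))

lemma pairwise_le_replicate_append_sort (μ : Multiset ℕ) (z : ℕ) :
    (List.replicate z 0 ++ μ.sort (· ≤ ·)).Pairwise (· ≤ ·) :=
  List.pairwise_append.2 ⟨List.pairwise_replicate.2 (Or.inr le_rfl), Multiset.pairwise_sort _ _,
    fun _ ha _ _ => List.eq_of_mem_replicate ha ▸ Nat.zero_le _⟩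

lemma card_rowOfParts (μ : Multiset ℕ) (z : ℕ) :
    (rowOfParts μ z).card = z + Multiset.card μ := by
  simp [rowOfParts, card_ofPartsList (pairwise_le_replicate_append_sort μ z)]

lemma rowParts_rowOfParts {μ : Multiset ℕ} (hμ : 0 ∉ μ) (z : ℕ) :
    rowParts (rowOfParts μ z) = μ := by
  rw [rowParts_eq_filter, rowOfParts,
    partsList_ofPartsList (pairwise_le_replicate_append_sort μ z), ← Multiset.coe_add,
    Multiset.sort_eq, Multiset.filter_add,
    Multiset.filter_eq_self.2 fun _ ha => ne_of_mem_of_not_mem ha hμ]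
  simp

/-- Both rows are lengthened by `card λᵗ + card μᵗ`, so the defect is unchanged. -/
def dual (Λ : LSymbol) : LSymbol :=
  ⟨rowOfParts (conjPartition Λ.upsilon.2)
      (Multiset.card (conjPartition Λ.upsilon.1) + Λ.A.card),
   rowOfParts (conjPartition Λ.upsilon.1)
      (Multiset.card (conjPartition Λ.upsilon.2) + Λ.B.card)⟩

lemma isACDual_dual (Λ : LSymbol) : IsACDual Λ (dual Λ) := by
  refine ⟨?_, ?_⟩
  · simp only [defect, dual, card_rowOfParts]
    push_cast
    ring
  · simp only [upsilon, dual, rowParts_rowOfParts (zero_notMem_conjPartition _)]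

end LSymbol

open LSymbol

lemma IsACDual.shiftEquiv {Λ D D' : LSymbol} (hD : IsACDual Λ D) (hD' : IsACDual Λ D') :
    ShiftEquiv D D' :=
  shiftEquiv_of_defect_eq_of_upsilon_eq (hD.1.trans hD'.1.symm) (hD.2.trans hD'.2.symm)

lemma IsACDual.rank_eq {Λ D : LSymbol} (hD : IsACDual Λ D) : D.rank = Λ.rank := by
  rw [LSymbol.rank_eq, LSymbol.rank_eq, hD.1, hD.2]
  simp only [sum_conjPartition, add_comm]

lemma IsACDual.shiftEquiv_of_isACDual {Λ D D₂ : LSymbol} (hD : IsACDual Λ D)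
    (hD₂ : IsACDual D D₂) : ShiftEquiv D₂ Λ := by
  refine shiftEquiv_of_defect_eq_of_upsilon_eq (hD₂.1.trans hD.1) ?_
  rw [hD₂.2, hD.2]
  exact Prod.ext (conjPartition_conjPartition (zero_notMem_rowParts _))
    (conjPartition_conjPartition (zero_notMem_rowParts _))

/-- Every symbol `Λ` admits an Alvis–Curtis dual `ᵈΛ`, unique up to shift-equivalence;
moreover `rank(ᵈΛ) = rank(Λ)`, and `ᵈ(ᵈΛ)` is shift-equivalent to `Λ`, so the
Alvis–Curtis dual is an involution on shift-equivalence classes of symbols of any fixed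
rank and defect. -/
theorem statement5 (Λ : LSymbol) :
    (∃ D : LSymbol, IsACDual Λ D) ∧
    (∀ D D' : LSymbol, IsACDual Λ D → IsACDual Λ D' → LSymbol.ShiftEquiv D D') ∧
    (∀ D : LSymbol, IsACDual Λ D → D.rank = Λ.rank) ∧
    (∀ D D₂ : LSymbol, IsACDual Λ D → IsACDual D D₂ → LSymbol.ShiftEquiv D₂ Λ) :=
  ⟨⟨dual Λ, isACDual_dual Λ⟩, fun _ _ hD hD' => hD.shiftEquiv hD', fun _ hD => hD.rank_eq,
    fun _ _ hD hD₂ => hD.shiftEquiv_of_isACDual hD₂⟩
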